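/- For (Ω,β₁,β₂) ∈ (−π,π]×(0,π)×(0,π), the gradient of L₁ vanishes at (Ω,β₁,β₂) if and only if (Ω,β₁,β₂) is one of the following eight points: (π/2, π/2, π/2); (−π/2, π/2, π/2); (0, arccos((√5−1)/2), (1/2)·arctan(2√(2+√5))); (π, arccos((√5−1)/2), π − (1/2)·arctan(2√(2+√5))); (0, arccos((1+√6)/5), π − (1/2)·arccos(1/(1−√6))); (π, arccos((1+√6)/5), (1/2)·arccos(1/(1−√6))); (0, arccos((1−√6)/5), π − (1/2)·arccos(1/(1+√6))); (π, arccos((1−√6)/5), (1/2)·arccos(1/(1+√6))). -/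

import Mathlib

open Matrix

/-- The kinematic landscape function `L₁(Ω,β₁,β₂)`. -/
noncomputable def L1 (Ω β₁ β₂ : ℝ) : ℝ :=
  (1/8) * Real.sin β₂ ^ 2 * (3 + Real.cos (2*β₁))
  + (1/2) * Real.sin β₁ ^ 2 * Real.cos β₂ ^ 2
  - (1/2) * Real.cos Ω * Real.sin β₁ * Real.sin (β₁/2) ^ 2 * Real.sin (2*β₂)

/-- `L₁` as a function on `ℝ³`. -/
noncomputable def L1v (v : Fin 3 → ℝ) : ℝ := L1 (v 0) (v 1) (v 2)

/-- Hessian matrix of second partial derivatives of `f : ℝⁿ → ℝ` at `p`. -/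
noncomputable def hessian {n : ℕ} (f : (Fin n → ℝ) → ℝ) (p : Fin n → ℝ) :
    Matrix (Fin n) (Fin n) ℝ :=
  Matrix.of fun i j => fderiv ℝ (fun y => fderiv ℝ f y (Pi.single j 1)) p (Pi.single i 1)

/-!
In terms of `ω = cos Ω`, `s = sin β₁`, `c = cos β₁`, `S = sin 2β₂` and `C = cos 2β₂` the
partial derivatives of `L₁` are, up to a factor `1/4`, the polynomials
`sin Ω · s (1 - c) S`, `s c (1 + 3C) - ω (1 - c)(1 + 2c) S` and `S (3c² - 1) - 2ω s (1 - c) C`.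
If `S = 0` they force `ω = c = 0`, which gives the two critical points with `β₁ = β₂ = π/2`.
Otherwise `sin Ω = 0`, so `ω = ±1`, and with `T = ω S` the last two equations are linear and
homogeneous in `(s, T)`. Their determinant must vanish; together with the square of the second
equation this eliminates `C` and leaves `(c² + c - 1)(5c² - 2c - 1) = 0`. Each admissible root
determines `C` and the sign of `T`, and the sign of `S = ω T` decides in which half of `(0, π)`
the angle `β₂` lies.
-/

open Real Set

theorem L1_eq (Ω β₁ β₂ : ℝ) :
    L1 Ω β₁ β₂ = (1 - cos (2 * β₂)) * (1 + cos β₁ ^ 2) / 8 + sin β₁ ^ 2 * (1 + cos (2 * β₂)) / 4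
      - cos Ω * sin β₁ * (1 - cos β₁) * sin (2 * β₂) / 4 := by
  have half : sin (β₁ / 2) ^ 2 = (1 - cos β₁) / 2 := by
    rw [sin_sq, cos_sq, mul_div_cancel₀ _ two_ne_zero]; ring
  rw [L1, half, sin_sq β₂, cos_sq β₂, cos_two_mul β₁]
  ring

local notation "coord" => (ContinuousLinearMap.proj : Fin 3 → (Fin 3 → ℝ) →L[ℝ] ℝ)

theorem hasFDerivAt_L1v (x : Fin 3 → ℝ) :
    HasFDerivAt L1v
      ((sin (x 0) * sin (x 1) * (1 - cos (x 1)) * sin (2 * x 2) / 4) • coord 0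
        + ((sin (x 1) * cos (x 1) * (1 + 3 * cos (2 * x 2))
            - cos (x 0) * (1 - cos (x 1)) * (1 + 2 * cos (x 1)) * sin (2 * x 2)) / 4) • coord 1
        + ((sin (2 * x 2) * (3 * cos (x 1) ^ 2 - 1)
            - 2 * cos (x 0) * sin (x 1) * (1 - cos (x 1)) * cos (2 * x 2)) / 4) • coord 2) x := by
  have hΩ := (coord 0).hasFDerivAt (x := x)
  have hβ₁ := (coord 1).hasFDerivAt (x := x)
  have hβ₂ := ((coord 2).hasFDerivAt (x := x)).const_mul 2
  have H := ((((hβ₂.cos.const_sub 1).mul ((hβ₁.cos.pow 2).const_add 1)).mul_const (1 / 8)).add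
    (((hβ₁.sin.pow 2).mul (hβ₂.cos.const_add 1)).mul_const (1 / 4))).sub
    ((((hΩ.cos.mul hβ₁.sin).mul (hβ₁.cos.const_sub 1)).mul hβ₂.sin).mul_const (1 / 4))
  have hL : L1v = fun v => (1 - cos (2 * v 2)) * (1 + cos (v 1) ^ 2) * (1 / 8)
      + sin (v 1) ^ 2 * (1 + cos (2 * v 2)) * (1 / 4)
      - cos (v 0) * sin (v 1) * (1 - cos (v 1)) * sin (2 * v 2) * (1 / 4) := by
    funext v; rw [L1v, L1_eq]; ring
  rw [hL]
  refine H.congr_fderiv ?_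
  ext v
  simp only [one_div, Fin.isValue, ContinuousLinearMap.proj_apply, Nat.add_one_sub_one, pow_one,
    nsmul_eq_mul, Nat.cast_ofNat, smul_neg, smul_add, Pi.mul_apply, _root_.sub_apply,
    _root_.add_apply, _root_.smul_apply, smul_eq_mul, neg_mul, mul_neg, _root_.neg_apply, neg_neg]
  linear_combination (-(sin (2 * x 2) * cos (x 0) * v 1) / 4 - sin (2 * x 2) * v 2 / 2)
    * sin_sq_add_cos_sq (x 1)

theorem smul_coord_add_eq_zero_iff {a b c : ℝ} :
    a • coord 0 + b • coord 1 + c • coord 2 = 0 ↔ a = 0 ∧ b = 0 ∧ c = 0 := by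
  constructor
  · intro h
    have h' (i : Fin 3) := DFunLike.congr_fun h (Pi.single i 1)
    simpa using And.intro (h' 0) (And.intro (h' 1) (h' 2))
  · rintro ⟨rfl, rfl, rfl⟩
    simp

theorem fderiv_L1v_eq_zero_iff (Ω β₁ β₂ : ℝ) :
    fderiv ℝ L1v ![Ω, β₁, β₂] = 0 ↔
      sin Ω * sin β₁ * (1 - cos β₁) * sin (2 * β₂) = 0
      ∧ sin β₁ * cos β₁ * (1 + 3 * cos (2 * β₂))
          = cos Ω * (1 - cos β₁) * (1 + 2 * cos β₁) * sin (2 * β₂)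
      ∧ sin (2 * β₂) * (3 * cos β₁ ^ 2 - 1) = 2 * cos Ω * sin β₁ * (1 - cos β₁) * cos (2 * β₂) := by
  rw [(hasFDerivAt_L1v _).fderiv, smul_coord_add_eq_zero_iff]
  simp [sub_eq_zero]

theorem sq_add_self_sub_one_eq_zero_iff {c : ℝ} (hc : -1 < c) :
    c ^ 2 + c - 1 = 0 ↔ c = (√5 - 1) / 2 := by
  have h5 : √5 ^ 2 = 5 := sq_sqrt (by norm_num)
  constructor
  · intro h
    have : (c - (√5 - 1) / 2) * (c + (√5 + 1) / 2) = 0 := by linear_combination h - h5 / 4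
    refine sub_eq_zero.1 <| (mul_eq_zero.1 this).resolve_right fun h' => ?_
    nlinarith [sqrt_nonneg 5]
  · rintro rfl
    linear_combination h5 / 4

theorem five_mul_sq_sub_two_mul_sub_one_eq_zero_iff {c : ℝ} :
    5 * c ^ 2 - 2 * c - 1 = 0 ↔ c = (1 + √6) / 5 ∨ c = (1 - √6) / 5 := by
  have h6 : √6 ^ 2 = 6 := sq_sqrt (by norm_num)
  constructor
  · intro h
    have : (c - (1 + √6) / 5) * (c - (1 - √6) / 5) = 0 := by linear_combination h / 5 - h6 / 25
    simpa [sub_eq_zero] using this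
  · rintro (rfl | rfl) <;> linear_combination h6 / 5

theorem eq_of_sq_eq_of_mul_pos {x y : ℝ} (h : x ^ 2 = y ^ 2) (hxy : 0 < x * y) : x = y := by
  rcases sq_eq_sq_iff_eq_or_eq_neg.1 h with h | rfl
  · exact h
  · nlinarith

/-- The `β₁`- and `β₂`-equations at `cos Ω = ±1`, written with `T = cos Ω * sin (2 * β₂)`. -/
def ReducedCritical (s c T C : ℝ) : Prop :=
  s * c * (1 + 3 * C) = (1 - c) * (1 + 2 * c) * T ∧ T * (3 * c ^ 2 - 1) = 2 * s * (1 - c) * C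

section
variable {s c T C : ℝ}

theorem three_mul_sq_sub_one_ne_zero_of_reducedCritical (hs : 0 < s) (hsc : s ^ 2 + c ^ 2 = 1)
    (hTC : T ^ 2 + C ^ 2 = 1) (h : ReducedCritical s c T C) : 3 * c ^ 2 - 1 ≠ 0 := by
  obtain ⟨h₁, h₂⟩ := h
  intro hc
  have hc1 : c < 1 := by nlinarith
  have hC : C = 0 := by
    have : 2 * s * (1 - c) * C = 0 := by rw [← h₂, hc, mul_zero]
    simpa [hs.ne', (sub_pos.2 hc1).ne'] using this
  subst hC
  have hsq : (s * c) ^ 2 = ((1 - c) * (1 + 2 * c)) ^ 2 * T ^ 2 := by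
    rw [← mul_pow, ← h₁]; ring
  have hpoly : (1 - c ^ 2) * c ^ 2 = ((1 - c) * (1 + 2 * c)) ^ 2 := by
    linear_combination hsq - c ^ 2 * hsc + ((1 - c) * (1 + 2 * c)) ^ 2 * hTC
  have hc' : c = -1 / 3 := by
    linear_combination (-3 / 2) * hpoly + (3 / 2) * (-5 / 3 * c ^ 2 + 4 / 3 * c + 7 / 9) * hc
  rw [hc'] at hc
  norm_num at hc

theorem ReducedCritical.cases (hs : 0 < s) (hsc : s ^ 2 + c ^ 2 = 1) (hTC : T ^ 2 + C ^ 2 = 1)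
    (h : ReducedCritical s c T C) :
    (c ^ 2 + c - 1 = 0 ∧ C = 2 * c - 1 ∧ 0 < T) ∨ (5 * c ^ 2 - 2 * c - 1 = 0 ∧ C = -c ∧ T < 0) := by
  have h3 := three_mul_sq_sub_one_ne_zero_of_reducedCritical hs hsc hTC h
  obtain ⟨h₁, h₂⟩ := h
  have hc1 : c < 1 := by nlinarith
  have hdet : c * (3 * c ^ 2 - 1) + C * (5 * c ^ 3 + 6 * c ^ 2 - 3 * c - 2) = 0 := by
    have : s * (c * (3 * c ^ 2 - 1) + C * (5 * c ^ 3 + 6 * c ^ 2 - 3 * c - 2)) = 0 := by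
      linear_combination (3 * c ^ 2 - 1) * h₁ + (1 - c) * (1 + 2 * c) * h₂
    simpa [hs.ne'] using this
  have hsq : (1 - C ^ 2) * (3 * c ^ 2 - 1) ^ 2 = 4 * (1 - c ^ 2) * (1 - c) ^ 2 * C ^ 2 := by
    linear_combination (T * (3 * c ^ 2 - 1) + 2 * s * (1 - c) * C) * h₂
      - (3 * c ^ 2 - 1) ^ 2 * hTC + 4 * (1 - c) ^ 2 * C ^ 2 * hsc
  have hQ : (c ^ 2 + c - 1) * (5 * c ^ 2 - 2 * c - 1) = 0 := by
    have : (3 * c ^ 2 - 1) ^ 2 * (4 * (c + 1) ^ 2 * ((c ^ 2 + c - 1) * (5 * c ^ 2 - 2 * c - 1)))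
        = 0 := by
      linear_combination (5 * c ^ 3 + 6 * c ^ 2 - 3 * c - 2) ^ 2 * hsq
        + ((3 * c ^ 2 - 1) ^ 2 + 4 * (1 - c ^ 2) * (1 - c) ^ 2)
          * (C * (5 * c ^ 3 + 6 * c ^ 2 - 3 * c - 2) - c * (3 * c ^ 2 - 1)) * hdet
    have hc0 : c + 1 ≠ 0 := by nlinarith
    simpa [h3, hc0] using this
  rcases mul_eq_zero.1 hQ with hA | hB
  · have hC : C = 2 * c - 1 := by
      have : (c - 1) * (C - (2 * c - 1)) = 0 := by
        linear_combination hdet - (3 * c - 1 + C * (5 * c + 1)) * hA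
      simpa [sub_eq_zero, hc1.ne] using this
    subst hC
    exact Or.inl ⟨hA, rfl, by nlinarith⟩
  · have hC : C = -c := by
      have : (3 * c ^ 2 - 1) * (C + c) = 0 := by linear_combination hdet - C * (c + 1) * hB
      simpa [h3, add_eq_zero_iff_eq_neg] using this
    subst hC
    exact Or.inr ⟨hB, rfl, by nlinarith⟩

theorem reducedCritical_of_sq_add_self_sub_one_eq_zero (hs : 0 < s) (hsc : s ^ 2 + c ^ 2 = 1)
    (hTC : T ^ 2 + C ^ 2 = 1) (hA : c ^ 2 + c - 1 = 0) (hC : C = 2 * c - 1) (hT : 0 < T) :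
    ReducedCritical s c T C := by
  subst hC
  have hc₀ : 1 / 2 < c := by nlinarith
  have hc₁ : c < 2 / 3 := by nlinarith
  constructor <;> apply eq_of_sq_eq_of_mul_pos
  · linear_combination (c * (1 + 3 * (2 * c - 1))) ^ 2 * hsc - ((1 - c) * (1 + 2 * c)) ^ 2 * hTC
      + (4 * c + 4 * c ^ 2 + 12 * c ^ 3 - 20 * c ^ 4) * hA
  · have : 0 < c * (1 + 3 * (2 * c - 1)) * ((1 - c) * (1 + 2 * c)) := by
      apply mul_pos <;> apply mul_pos <;> linarith
    nlinarith [mul_pos hs hT]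
  · linear_combination (3 * c ^ 2 - 1) ^ 2 * hTC - (2 * (1 - c) * (2 * c - 1)) ^ 2 * hsc
      + (4 - 24 * c + 32 * c ^ 2 + 8 * c ^ 3 - 20 * c ^ 4) * hA
  · have : 0 < (3 * c ^ 2 - 1) * (2 * (1 - c) * (2 * c - 1)) :=
      mul_pos (by nlinarith) (mul_pos (mul_pos two_pos (by linarith)) (by linarith))
    nlinarith [mul_pos hs hT]

theorem reducedCritical_of_five_mul_sq_sub_two_mul_sub_one_eq_zero (hs : 0 < s)
    (hsc : s ^ 2 + c ^ 2 = 1) (hTC : T ^ 2 + C ^ 2 = 1) (hB : 5 * c ^ 2 - 2 * c - 1 = 0)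
    (hC : C = -c) (hT : T < 0) : ReducedCritical s c T C := by
  subst hC
  have hc₀ : -1 / 2 < c := by nlinarith
  have hc₁ : c < 1 := by nlinarith
  constructor <;> apply eq_of_sq_eq_of_mul_pos
  · linear_combination (c * (1 + 3 * -c)) ^ 2 * hsc - ((1 - c) * (1 + 2 * c)) ^ 2 * hTC
      + (1 - c ^ 4) * hB
  · have h₁ : c * (1 + 3 * -c) < 0 := by nlinarith
    have h₂ : 0 < (1 - c) * (1 + 2 * c) := by apply mul_pos <;> linarith
    nlinarith [mul_neg_of_pos_of_neg hs hT, mul_neg_of_neg_of_pos h₁ h₂]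
  · linear_combination (3 * c ^ 2 - 1) ^ 2 * hTC - (2 * (1 - c) * -c) ^ 2 * hsc
      + (-1 + 2 * c + 2 * c ^ 2 - 2 * c ^ 3 - c ^ 4) * hB
  · have h₁ : 0 < c * (3 * c ^ 2 - 1) := by nlinarith
    have := mul_pos (mul_pos (neg_pos.2 (mul_neg_of_pos_of_neg hs hT)) (sub_pos.2 hc₁)) h₁
    linarith

theorem reducedCritical_iff (hs : 0 < s) (hsc : s ^ 2 + c ^ 2 = 1) (hTC : T ^ 2 + C ^ 2 = 1) :
    ReducedCritical s c T C ↔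
      (c = (√5 - 1) / 2 ∧ C = √5 - 2 ∧ 0 < T)
      ∨ (c = (1 + √6) / 5 ∧ C = -(1 + √6) / 5 ∧ T < 0)
      ∨ (c = (1 - √6) / 5 ∧ C = (√6 - 1) / 5 ∧ T < 0) := by
  have hc : -1 < c := by nlinarith
  constructor
  · intro h
    rcases h.cases hs hsc hTC with ⟨hA, rfl, hT⟩ | ⟨hB, rfl, hT⟩
    · obtain rfl := (sq_add_self_sub_one_eq_zero_iff hc).1 hA
      exact Or.inl ⟨rfl, by ring, hT⟩
    · rcases five_mul_sq_sub_two_mul_sub_one_eq_zero_iff.1 hB with rfl | rfl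
      · exact Or.inr (Or.inl ⟨rfl, by ring, hT⟩)
      · exact Or.inr (Or.inr ⟨rfl, by ring, hT⟩)
  · rintro (⟨rfl, rfl, hT⟩ | ⟨rfl, rfl, hT⟩ | ⟨rfl, rfl, hT⟩)
    · exact reducedCritical_of_sq_add_self_sub_one_eq_zero hs hsc hTC
        ((sq_add_self_sub_one_eq_zero_iff hc).2 rfl) (by ring) hT
    · exact reducedCritical_of_five_mul_sq_sub_two_mul_sub_one_eq_zero hs hsc hTC
        (five_mul_sq_sub_two_mul_sub_one_eq_zero_iff.2 (Or.inl rfl)) (by ring) hT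
    · exact reducedCritical_of_five_mul_sq_sub_two_mul_sub_one_eq_zero hs hsc hTC
        (five_mul_sq_sub_two_mul_sub_one_eq_zero_iff.2 (Or.inr rfl)) (by ring) hT

theorem critical_equations_iff_of_sq_eq_one {ω S : ℝ} (hω : ω ^ 2 = 1) (hs : 0 < s)
    (hsc : s ^ 2 + c ^ 2 = 1) (hSC : S ^ 2 + C ^ 2 = 1) :
    (s * c * (1 + 3 * C) = ω * (1 - c) * (1 + 2 * c) * S ∧
        S * (3 * c ^ 2 - 1) = 2 * ω * s * (1 - c) * C) ↔
      (c = (√5 - 1) / 2 ∧ C = √5 - 2 ∧ 0 < ω * S)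
      ∨ (c = (1 + √6) / 5 ∧ C = -(1 + √6) / 5 ∧ ω * S < 0)
      ∨ (c = (1 - √6) / 5 ∧ C = (√6 - 1) / 5 ∧ ω * S < 0) := by
  rw [← reducedCritical_iff hs hsc (by linear_combination S ^ 2 * hω + hSC), ReducedCritical]
  refine and_congr ⟨fun h => by linear_combination h, fun h => by linear_combination h⟩
    ⟨fun h => by linear_combination ω * h + 2 * s * (1 - c) * C * hω,
     fun h => by linear_combination ω * h - S * (3 * c ^ 2 - 1) * hω⟩

end

theorem critical_system_iff {σ ω s c S C : ℝ} (hσω : σ ^ 2 + ω ^ 2 = 1) (hs : 0 < s)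
    (hsc : s ^ 2 + c ^ 2 = 1) (hSC : S ^ 2 + C ^ 2 = 1) :
    (σ * s * (1 - c) * S = 0 ∧ s * c * (1 + 3 * C) = ω * (1 - c) * (1 + 2 * c) * S
      ∧ S * (3 * c ^ 2 - 1) = 2 * ω * s * (1 - c) * C) ↔
    (ω = 0 ∧ c = 0 ∧ S = 0)
    ∨ (ω = 1 ∧ c = (√5 - 1) / 2 ∧ C = √5 - 2 ∧ 0 < S)
    ∨ (ω = -1 ∧ c = (√5 - 1) / 2 ∧ C = √5 - 2 ∧ S < 0)
    ∨ (ω = 1 ∧ c = (1 + √6) / 5 ∧ C = -(1 + √6) / 5 ∧ S < 0)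
    ∨ (ω = -1 ∧ c = (1 + √6) / 5 ∧ C = -(1 + √6) / 5 ∧ 0 < S)
    ∨ (ω = 1 ∧ c = (1 - √6) / 5 ∧ C = (√6 - 1) / 5 ∧ S < 0)
    ∨ (ω = -1 ∧ c = (1 - √6) / 5 ∧ C = (√6 - 1) / 5 ∧ 0 < S) := by
  have hc : 1 - c ≠ 0 := by nlinarith
  rcases eq_or_ne S 0 with rfl | hS
  · have hC : C ≠ 0 ∧ 1 + 3 * C ≠ 0 := by constructor <;> intro h <;> nlinarith
    simp [hs.ne', hc, hC, and_comm]
  · have hσ : σ * s * (1 - c) * S = 0 ↔ σ = 0 := by simp [hs.ne', hc, hS]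
    rw [hσ]
    rcases eq_or_ne σ 0 with rfl | hσ
    · obtain rfl | rfl : ω = 1 ∨ ω = -1 := sq_eq_one_iff.1 (by linarith)
      · rw [critical_equations_iff_of_sq_eq_one (ω := 1) (by norm_num) hs hsc hSC]
        simp [hS, show (1 : ℝ) ≠ -1 by norm_num]
      · rw [critical_equations_iff_of_sq_eq_one (ω := -1) (by norm_num) hs hsc hSC]
        simp [hS, show (-1 : ℝ) ≠ 1 by norm_num]
    · have hω : ω ≠ 1 ∧ ω ≠ -1 := by
        constructor <;> rintro rfl <;> exact hσ (pow_eq_zero_iff two_ne_zero |>.1 (by linarith))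
      simp [hσ, hS, hω]

theorem cos_eq_iff_abs_eq_arccos {x y : ℝ} (hx : |x| ≤ π) (hy₁ : -1 ≤ y) (hy₂ : y ≤ 1) :
    cos x = y ↔ |x| = arccos y := by
  rw [← cos_abs]
  constructor
  · rintro rfl
    exact (arccos_cos (abs_nonneg x) hx).symm
  · intro h
    rw [h, cos_arccos hy₁ hy₂]

theorem cos_eq_one_iff_of_mem_Ioc {Ω : ℝ} (hΩ : Ω ∈ Ioc (-π) π) : cos Ω = 1 ↔ Ω = 0 := by
  rw [cos_eq_iff_abs_eq_arccos (abs_le.2 ⟨hΩ.1.le, hΩ.2⟩) (by norm_num) le_rfl, arccos_one,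
    abs_eq_zero]

theorem cos_eq_neg_one_iff_of_mem_Ioc {Ω : ℝ} (hΩ : Ω ∈ Ioc (-π) π) : cos Ω = -1 ↔ Ω = π := by
  rw [cos_eq_iff_abs_eq_arccos (abs_le.2 ⟨hΩ.1.le, hΩ.2⟩) le_rfl (by norm_num), arccos_neg_one,
    abs_eq pi_pos.le]
  exact or_iff_left hΩ.1.ne'

theorem cos_eq_zero_iff_of_mem_Ioc {Ω : ℝ} (hΩ : Ω ∈ Ioc (-π) π) :
    cos Ω = 0 ↔ Ω = π / 2 ∨ Ω = -(π / 2) := by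
  rw [cos_eq_iff_abs_eq_arccos (abs_le.2 ⟨hΩ.1.le, hΩ.2⟩) (by norm_num) (by norm_num),
    arccos_zero, abs_eq (by positivity)]

theorem cos_eq_iff_eq_arccos_of_mem_Ioo {x y : ℝ} (hx : x ∈ Ioo 0 π) :
    cos x = y ↔ x = arccos y := by
  constructor
  · rintro rfl
    exact (arccos_cos hx.1.le hx.2.le).symm
  · rintro rfl
    exact cos_arccos (arccos_lt_pi.1 hx.2).le (arccos_pos.1 hx.1).le

theorem sin_two_mul_eq_zero_iff_of_mem_Ioo {β : ℝ} (hβ : β ∈ Ioo 0 π) :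
    sin (2 * β) = 0 ↔ β = π / 2 := by
  rw [← neg_eq_zero, ← sin_sub_pi, sin_eq_zero_iff_of_lt_of_lt (by linarith [hβ.1])
    (by linarith [hβ.2])]
  constructor <;> intro h <;> linarith

theorem cos_two_mul_eq_and_sin_pos_iff {β y : ℝ} (hβ : β ∈ Ioo 0 π) (hy : -1 < y) :
    cos (2 * β) = y ∧ 0 < sin (2 * β) ↔ β = 1 / 2 * arccos y := by
  constructor
  · rintro ⟨rfl, hsin⟩
    have : 2 * β < π := by
      by_contra! h
      have := sin_nonneg_of_nonneg_of_le_pi (x := 2 * β - π) (by linarith) (by linarith [hβ.2])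
      rw [sin_sub_pi] at this
      linarith
    rw [arccos_cos (by linarith [hβ.1]) this.le]
    ring
  · rintro rfl
    have hy' : y < 1 := arccos_pos.1 (by linarith [hβ.1])
    rw [← mul_assoc, mul_one_div_cancel two_ne_zero, one_mul, cos_arccos hy.le hy'.le, sin_arccos]
    exact ⟨rfl, sqrt_pos.2 (by nlinarith)⟩

theorem cos_two_mul_eq_and_sin_neg_iff {β y : ℝ} (hβ : β ∈ Ioo 0 π) (hy : -1 < y) :
    cos (2 * β) = y ∧ sin (2 * β) < 0 ↔ β = π - 1 / 2 * arccos y := by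
  have hβ' : π - β ∈ Ioo 0 π := ⟨by linarith [hβ.2], by linarith [hβ.1]⟩
  have hcos : cos (2 * (π - β)) = cos (2 * β) := by rw [mul_sub, cos_two_pi_sub]
  have hsin : sin (2 * β) < 0 ↔ 0 < sin (2 * (π - β)) := by
    rw [mul_sub, sin_two_pi_sub, neg_pos]
  rw [← hcos, hsin, cos_two_mul_eq_and_sin_pos_iff hβ' hy]
  constructor <;> intro h <;> linarith

theorem arctan_two_mul_sqrt_two_add_sqrt_five : arctan (2 * √(2 + √5)) = arccos (√5 - 2) := by
  have h5 : √5 ^ 2 = 5 := sq_sqrt (by norm_num)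
  have h25 : 0 < 2 + √5 := by positivity
  have hsq : 1 + (2 * √(2 + √5)) ^ 2 = (2 + √5) ^ 2 := by
    rw [mul_pow, sq_sqrt h25.le]; linear_combination -h5
  rw [arctan_eq_arccos (by positivity), hsq, sqrt_sq h25.le, inv_eq_of_mul_eq_one_right]
  linear_combination h5

theorem one_div_one_sub_sqrt_six : 1 / (1 - √6) = -(1 + √6) / 5 := by
  have h6 : √6 ^ 2 = 6 := sq_sqrt (by norm_num)
  have : 1 - √6 ≠ 0 := by nlinarith
  field_simp
  linear_combination -h6

theorem one_div_one_add_sqrt_six : 1 / (1 + √6) = (√6 - 1) / 5 := by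
  have h6 : √6 ^ 2 = 6 := sq_sqrt (by norm_num)
  field_simp
  linear_combination -h6

open Real in
/-- on the domain `(−π,π]×(0,π)×(0,π)`, the gradient of `L₁`
vanishes at `(Ω,β₁,β₂)` if and only if `(Ω,β₁,β₂)` is one of the eight listed
critical points. -/
theorem stmt5 (Ω β₁ β₂ : ℝ)
    (hΩ : Ω ∈ Set.Ioc (-π) π) (hβ₁ : β₁ ∈ Set.Ioo 0 π) (hβ₂ : β₂ ∈ Set.Ioo 0 π) :
    fderiv ℝ L1v ![Ω, β₁, β₂] = 0 ↔
      ((Ω, β₁, β₂) = (π/2, π/2, π/2)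
      ∨ (Ω, β₁, β₂) = (-(π/2), π/2, π/2)
      ∨ (Ω, β₁, β₂) = (0, arccos ((Real.sqrt 5 - 1)/2),
          (1/2) * arctan (2 * Real.sqrt (2 + Real.sqrt 5)))
      ∨ (Ω, β₁, β₂) = (π, arccos ((Real.sqrt 5 - 1)/2),
          π - (1/2) * arctan (2 * Real.sqrt (2 + Real.sqrt 5)))
      ∨ (Ω, β₁, β₂) = (0, arccos ((1 + Real.sqrt 6)/5),
          π - (1/2) * arccos (1/(1 - Real.sqrt 6)))
      ∨ (Ω, β₁, β₂) = (π, arccos ((1 + Real.sqrt 6)/5),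
          (1/2) * arccos (1/(1 - Real.sqrt 6)))
      ∨ (Ω, β₁, β₂) = (0, arccos ((1 - Real.sqrt 6)/5),
          π - (1/2) * arccos (1/(1 + Real.sqrt 6)))
      ∨ (Ω, β₁, β₂) = (π, arccos ((1 - Real.sqrt 6)/5),
          (1/2) * arccos (1/(1 + Real.sqrt 6)))) := by
  have h5 : 1 < √5 := by rw [lt_sqrt zero_le_one]; norm_num
  have h6 : √6 < 4 := by rw [sqrt_lt' (by norm_num)]; norm_num
  have hC₁ : -1 < √5 - 2 := by linarith
  have hC₂ : -1 < -(1 + √6) / 5 := by linarith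
  have hC₃ : -1 < (√6 - 1) / 5 := by linarith [sqrt_nonneg 6]
  rw [fderiv_L1v_eq_zero_iff, critical_system_iff (sin_sq_add_cos_sq Ω) (sin_pos_of_mem_Ioo hβ₁)
    (sin_sq_add_cos_sq β₁) (sin_sq_add_cos_sq (2 * β₂)), cos_eq_zero_iff_of_mem_Ioc hΩ,
    cos_eq_one_iff_of_mem_Ioc hΩ, cos_eq_neg_one_iff_of_mem_Ioc hΩ,
    sin_two_mul_eq_zero_iff_of_mem_Ioo hβ₂,
    cos_two_mul_eq_and_sin_pos_iff hβ₂ hC₁, cos_two_mul_eq_and_sin_neg_iff hβ₂ hC₁,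
    cos_two_mul_eq_and_sin_pos_iff hβ₂ hC₂, cos_two_mul_eq_and_sin_neg_iff hβ₂ hC₂,
    cos_two_mul_eq_and_sin_pos_iff hβ₂ hC₃, cos_two_mul_eq_and_sin_neg_iff hβ₂ hC₃,
    arctan_two_mul_sqrt_two_add_sqrt_five, one_div_one_sub_sqrt_six, one_div_one_add_sqrt_six]
  simp only [cos_eq_iff_eq_arccos_of_mem_Ioo hβ₁, arccos_zero, Prod.mk.injEq]
  rw [or_and_right, or_assoc]
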